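/- Every connected graph on n ≥ 3 vertices with exactly n−2 pendant vertices is a double broom T(k,l,2) for some k,l ≥ 1 with k+l = n−2, and its Wiener index is minimized uniquely by T(1,n−3,2), with W(T(1,n−3,2)) = n^2 − n − 2. -/

import Mathlib

/-!
Let `a, b` be the two vertices of degree other than one. A pendant vertex `x` with neighbour `w`
satisfies `d(x, v) = d(w, v) + 1` for every `v ≠ x`. Hence two adjacent pendant vertices would
form the whole (connected) graph, so every pendant vertex hangs on `a` or `b`, and a shortest
path from `a` to `b` cannot start with a pendant vertex, so `a ~ b`.

Such a graph is the pull-back of the path leaf–hub–hub–leaf along a role map whose hub fibres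
are singletons, so it is determined up to isomorphism by its leaf counts `k, l`. Distinct vertices
are at distance (number of leaves among them) + (one if they lie on different sides); summing
over fibres gives `W = k² + l² + 3kl + 2k + 2l + 1 = W(T(1, k + l - 1, 2)) + (k - 1)(l - 1)`.
-/

open Finset SimpleGraph

/-- The sum of distances from `u` to all vertices of `G`. -/
noncomputable def distSum {V : Type*} [Fintype V] (G : SimpleGraph V) (u : V) : ℕ :=
  ∑ v, G.dist u v

/-- The Wiener index of `G`: the sum of distances over all unordered pairs of vertices. -/
noncomputable def wienerIndex {V : Type*} [Fintype V] (G : SimpleGraph V) : ℕ :=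
  (∑ u : V, ∑ v : V, G.dist u v) / 2

/-- The double broom T(l,k,d): the path on vertices 0,…,d-1, with l pendant vertices
attached to the endpoint 0 and k pendant vertices attached to the endpoint d-1. -/
def doubleBroom (l k d : ℕ) : SimpleGraph (Fin (l + k + d)) :=
  SimpleGraph.fromRel (fun i j =>
    (i.val < d ∧ j.val = i.val + 1 ∧ j.val < d) ∨
    (i.val = 0 ∧ d ≤ j.val ∧ j.val < d + l) ∨
    (i.val = d - 1 ∧ d + l ≤ j.val))

namespace SimpleGraph

variable {V W : Type*} {G : SimpleGraph V}

theorem Reachable.exists_adj_dist_lt {u v : V} (h : G.Reachable u v) (hne : u ≠ v) :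
    ∃ w, G.Adj u w ∧ G.dist w v < G.dist u v := by
  obtain ⟨p, hp⟩ := h.exists_walk_length_eq_dist
  cases p with
  | nil => exact absurd rfl hne
  | cons hadj q => exact ⟨_, hadj, hp ▸ (dist_le q).trans_lt (Nat.lt_succ_self _)⟩

theorem Reachable.dist_eq_dist_add_one_of_neighborSet_eq {x w v : V} (hr : G.Reachable x v)
    (hx : G.neighborSet x = {w}) (hv : v ≠ x) : G.dist x v = G.dist w v + 1 := by
  obtain ⟨w', hxw', hlt⟩ := hr.exists_adj_dist_lt hv.symm
  obtain rfl : w' = w := by rwa [← mem_neighborSet, hx] at hxw'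
  refine le_antisymm ?_ hlt
  simpa [dist_comm, dist_eq_one_iff_adj.mpr hxw', add_comm] using
    hxw'.reachable.dist_triangle_left v

theorem Iso.dist_eq {H : SimpleGraph W} (e : G ≃g H) (u v : V) :
    H.dist (e u) (e v) = G.dist u v := by
  by_cases h : G.Reachable u v
  · have h' : H.Reachable (e u) (e v) := Iso.reachable_iff.mpr h
    obtain ⟨p, hp⟩ := h.exists_walk_length_eq_dist
    obtain ⟨q, hq⟩ := h'.exists_walk_length_eq_dist
    refine le_antisymm ?_ ?_
    · rw [← hp, ← Walk.length_map e.toHom]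
      exact dist_le _
    · simpa [hq] using dist_le (q.map e.symm.toHom)
  · rw [dist_eq_zero_of_not_reachable h, dist_eq_zero_of_not_reachable (mt Iso.reachable_iff.mp h)]

noncomputable def comapIsoOfCardFiber {γ : Type*} [Fintype V] [Fintype W] [DecidableEq γ]
    (H : SimpleGraph γ) {f : V → γ} {g : W → γ}
    (hfg : ∀ c, Fintype.card {x // f x = c} = Fintype.card {y // g y = c}) :
    H.comap f ≃g H.comap g where
  toEquiv := Equiv.ofFiberEquiv fun c => Fintype.equivOfCardEq (hfg c)
  map_rel_iff' := by simp only [comap_adj, Equiv.ofFiberEquiv_map, implies_true]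

section Pendant

variable {x w : V}

theorem exists_neighborSet_eq_singleton_of_degree_eq_one [Fintype (G.neighborSet x)]
    (h : G.degree x = 1) : ∃ w, G.neighborSet x = {w} := by
  obtain ⟨w, hw, hunique⟩ := degree_eq_one_iff_existsUnique_adj.mp h
  exact ⟨w, Set.eq_singleton_iff_unique_mem.mpr ⟨hw, hunique⟩⟩

theorem Connected.card_le_two_of_neighborSet_eq_singleton [Fintype V] (hG : G.Connected)
    (hx : G.neighborSet x = {w}) (hw : G.neighborSet w = {x}) : Fintype.card V ≤ 2 := by
  classical
  have hall (v : V) : v ∈ ({x, w} : Finset V) := by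
    by_contra! hv
    simp only [Finset.mem_insert, Finset.mem_singleton, not_or] at hv
    have hxv := (hG.preconnected x v).dist_eq_dist_add_one_of_neighborSet_eq hx hv.1
    have hwv := (hG.preconnected w v).dist_eq_dist_add_one_of_neighborSet_eq hw hv.2
    omega
  exact (Finset.card_le_card fun v _ => hall v).trans Finset.card_le_two

variable [Fintype V] [DecidableRel G.Adj] {a b : V}

theorem Connected.neighborSet_eq_singleton_of_forall_degree_eq_one (hG : G.Connected)
    (hV : 3 ≤ Fintype.card V) (hpend : ∀ x, x ≠ a → x ≠ b → G.degree x = 1)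
    (hxa : x ≠ a) (hxb : x ≠ b) : G.neighborSet x = {a} ∨ G.neighborSet x = {b} := by
  obtain ⟨w, hx⟩ := exists_neighborSet_eq_singleton_of_degree_eq_one (hpend x hxa hxb)
  by_contra! hw
  obtain ⟨x', hw'⟩ := exists_neighborSet_eq_singleton_of_degree_eq_one
    (hpend w (fun h => hw.1 (h ▸ hx)) (fun h => hw.2 (h ▸ hx)))
  have hx' : x = x' := by
    have hxw : G.Adj x w := by rw [← mem_neighborSet, hx]; rfl
    rw [← Set.mem_singleton_iff, ← hw']
    exact hxw.symm
  subst hx'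
  have := hG.card_le_two_of_neighborSet_eq_singleton hx hw'
  omega

theorem Connected.adj_of_forall_degree_eq_one (hG : G.Connected)
    (hV : 3 ≤ Fintype.card V) (hpend : ∀ x, x ≠ a → x ≠ b → G.degree x = 1)
    (hab : a ≠ b) :
    G.Adj a b := by
  obtain ⟨y, hay, hy⟩ := (hG.preconnected a b).exists_adj_dist_lt hab
  by_cases hyb : y = b
  · exact hyb ▸ hay
  have hya : y ≠ a := (G.ne_of_adj hay).symm
  have hya' : G.neighborSet y = {a} := by
    refine (hG.neighborSet_eq_singleton_of_forall_degree_eq_one hV hpend hya hyb).resolve_right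
      fun h => hab ?_
    rw [← Set.mem_singleton_iff, ← h]
    exact hay.symm
  have := (hG.preconnected y b).dist_eq_dist_add_one_of_neighborSet_eq hya' (Ne.symm hyb)
  omega

end Pendant

end SimpleGraph

open SimpleGraph

theorem Fintype.sum_comp_eq_sum_card_fiber_smul {ι κ M : Type*} [Fintype ι] [Fintype κ]
    [DecidableEq κ] [AddCommMonoid M] (g : ι → κ) (f : κ → M) :
    ∑ i, f (g i) = ∑ j, Fintype.card {i // g i = j} • f j := by
  simp [← Fintype.sum_fiberwise' g f]

theorem wienerIndex_congr {V W : Type*} [Fintype V] [Fintype W] {G : SimpleGraph V}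
    {H : SimpleGraph W} (e : G ≃g H) : wienerIndex G = wienerIndex H := by
  unfold wienerIndex
  congr 1
  refine Fintype.sum_equiv e.toEquiv _ _ fun u => Fintype.sum_equiv e.toEquiv _ _ fun v => ?_
  exact (e.dist_eq u v).symm

theorem Fin.card_subtype_le_and_lt {n a b : ℕ} (hb : b ≤ n) :
    Fintype.card {i : Fin n // a ≤ i.val ∧ i.val < b} = b - a := by
  rw [← Fintype.card_fin (b - a)]
  exact Fintype.card_congr
    { toFun i := ⟨i.1 - a, by omega⟩
      invFun j := ⟨⟨j + a, by omega⟩, by simp; omega⟩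
      left_inv i := by ext; simp; omega
      right_inv j := by ext; simp }

/-- The path `(true, true) - (true, false) - (false, false) - (false, true)`. A vertex `(s, l)`
stands for the hub (`l = false`) or a leaf (`l = true`) on side `s` of a double star. -/
def doubleStarShape : SimpleGraph (Bool × Bool) where
  Adj p q := (p.1 = q.1 ∧ p.2 ≠ q.2) ∨ (p.1 ≠ q.1 ∧ p.2 = false ∧ q.2 = false)
  symm := ⟨fun p q h => by grind⟩
  loopless := ⟨fun p => by simp⟩

instance : DecidableRel doubleStarShape.Adj := fun p q => by
  unfold doubleStarShape; infer_instance

-- Leaf fibres may be empty: a star, or even a single edge, is a double star too.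
structure IsDoubleStar {V : Type*} (G : SimpleGraph V) (role : V → Bool × Bool) : Prop where
  eq_comap : G = doubleStarShape.comap role
  existsUnique_hub : ∀ s, ∃! x, role x = (s, false)

namespace IsDoubleStar

variable {V W : Type*} {G : SimpleGraph V} {role : V → Bool × Bool}

theorem adj_iff (hG : IsDoubleStar G role) {x y : V} :
    G.Adj x y ↔ doubleStarShape.Adj (role x) (role y) := by
  rw [hG.eq_comap, comap_adj]

theorem swap (hG : IsDoubleStar G role) : IsDoubleStar G (Prod.map (!·) id ∘ role) where
  eq_comap := by
    ext x y
    rw [hG.adj_iff, comap_adj, Function.comp_apply, Function.comp_apply]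
    generalize role x = p
    generalize role y = q
    revert p q
    decide
  existsUnique_hub s := by
    simpa [Prod.ext_iff, Bool.not_eq_iff] using hG.existsUnique_hub (!s)

theorem card_hub [Fintype V] (hG : IsDoubleStar G role) (s : Bool) :
    Fintype.card {x // role x = (s, false)} = 1 :=
  Fintype.card_eq_one_iff.mpr <| by
    obtain ⟨x, hx, hunique⟩ := hG.existsUnique_hub s
    exact ⟨⟨x, hx⟩, fun y => Subtype.ext (hunique y y.2)⟩

theorem nonempty_iso [Fintype V] [Fintype W] {H : SimpleGraph W} {role' : W → Bool × Bool}
    (hG : IsDoubleStar G role) (hH : IsDoubleStar H role')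
    (hleaf : ∀ s,
      Fintype.card {x // role x = (s, true)} = Fintype.card {y // role' y = (s, true)}) :
    Nonempty (G ≃g H) := by
  rw [hG.eq_comap, hH.eq_comap]
  refine ⟨comapIsoOfCardFiber _ fun ⟨s, leaf⟩ => ?_⟩
  cases leaf
  · rw [hG.card_hub, hH.card_hub]
  · exact hleaf s

def shapeDist (p q : Bool × Bool) : ℕ := p.2.toNat + q.2.toNat + (p.1 != q.1).toNat

variable {x y : V}

noncomputable def hub (hG : IsDoubleStar G role) (s : Bool) : V :=
  (hG.existsUnique_hub s).exists.choose

theorem role_hub (hG : IsDoubleStar G role) (s : Bool) : role (hG.hub s) = (s, false) :=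
  (hG.existsUnique_hub s).exists.choose_spec

theorem eq_hub_iff (hG : IsDoubleStar G role) {s : Bool} : x = hG.hub s ↔ role x = (s, false) :=
  ⟨fun h => h ▸ hG.role_hub s, fun h => (hG.existsUnique_hub s).unique h (hG.role_hub s)⟩

theorem eq_hub_of_not_leaf (hG : IsDoubleStar G role) (hx : (role x).2 = false) :
    x = hG.hub (role x).1 :=
  hG.eq_hub_iff.mpr (Prod.ext rfl hx)

theorem neighborSet_eq_of_leaf (hG : IsDoubleStar G role) (hx : (role x).2 = true) :
    G.neighborSet x = {hG.hub (role x).1} := by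
  ext y
  rw [mem_neighborSet, hG.adj_iff, Set.mem_singleton_iff, hG.eq_hub_iff]
  generalize role x = p at hx ⊢
  generalize role y = q
  revert p q
  decide

theorem adj_hub_hub (hG : IsDoubleStar G role) {s s' : Bool} (h : s ≠ s') :
    G.Adj (hG.hub s) (hG.hub s') := by
  rw [hG.adj_iff, hG.role_hub, hG.role_hub]
  revert s s'
  decide

theorem reachable (hG : IsDoubleStar G role) (x y : V) : G.Reachable x y := by
  have hub_reachable (s : Bool) : G.Reachable (hG.hub s) (hG.hub false) := by
    cases s
    · rfl
    · exact (hG.adj_hub_hub Bool.noConfusion).reachable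
  have to_hub (x : V) : G.Reachable x (hG.hub false) := by
    cases hx : (role x).2
    · rw [hG.eq_hub_of_not_leaf hx]
      exact hub_reachable _
    · have hadj : G.Adj x (hG.hub (role x).1) := by
        rw [← mem_neighborSet, hG.neighborSet_eq_of_leaf hx]; rfl
      exact hadj.reachable.trans (hub_reachable _)
  exact (to_hub x).trans (to_hub y).symm

theorem dist_hub_hub (hG : IsDoubleStar G role) (s s' : Bool) :
    G.dist (hG.hub s) (hG.hub s') = (s != s').toNat := by
  by_cases h : s = s'
  · simp [h]
  · rw [dist_eq_one_iff_adj.mpr (hG.adj_hub_hub h)]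
    cases s <;> cases s' <;> simp_all

theorem dist_hub (hG : IsDoubleStar G role) (s : Bool) (y : V) :
    G.dist (hG.hub s) y = shapeDist (s, false) (role y) := by
  cases hy : (role y).2
  · rw [hG.eq_hub_of_not_leaf hy, dist_hub_hub, hG.role_hub]
    simp [shapeDist]
  · have hne : hG.hub s ≠ y := by
      rintro rfl
      simp [hG.role_hub] at hy
    rw [dist_comm, (hG.reachable y _).dist_eq_dist_add_one_of_neighborSet_eq
      (hG.neighborSet_eq_of_leaf hy) hne, dist_hub_hub]
    simp [shapeDist, hy, bne_comm, add_comm]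

theorem dist_eq (hG : IsDoubleStar G role) (hxy : x ≠ y) :
    G.dist x y = shapeDist (role x) (role y) := by
  cases hx : (role x).2
  · rw [hG.eq_hub_of_not_leaf hx, dist_hub, hG.role_hub]
  · rw [(hG.reachable x y).dist_eq_dist_add_one_of_neighborSet_eq (hG.neighborSet_eq_of_leaf hx)
      hxy.symm, dist_hub]
    simp [shapeDist, hx]
    omega

theorem sum_sum_dist_add_sum_shapeDist [Fintype V] (hG : IsDoubleStar G role) :
    ∑ x, ∑ y, G.dist x y + ∑ x, shapeDist (role x) (role x) =
      ∑ x, ∑ y, shapeDist (role x) (role y) := by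
  classical
  have hpoint (x y : V) : G.dist x y + (if x = y then shapeDist (role x) (role y) else 0) =
      shapeDist (role x) (role y) := by
    split_ifs with h
    · simp [h]
    · rw [hG.dist_eq h, add_zero]
  calc ∑ x, ∑ y, G.dist x y + ∑ x, shapeDist (role x) (role x)
      = ∑ x, ∑ y, (G.dist x y + if x = y then shapeDist (role x) (role y) else 0) := by
        simp only [Finset.sum_add_distrib, Finset.sum_ite_eq, Finset.mem_univ, if_true]
    _ = ∑ x, ∑ y, shapeDist (role x) (role y) := by simp only [hpoint]

theorem wienerIndex_eq [Fintype V] (hG : IsDoubleStar G role) {k l : ℕ}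
    (hk : Fintype.card {x // role x = (false, true)} = k)
    (hl : Fintype.card {x // role x = (true, true)} = l) :
    wienerIndex G = k ^ 2 + l ^ 2 + 3 * k * l + 2 * k + 2 * l + 1 := by
  have hfib := Fintype.sum_comp_eq_sum_card_fiber_smul (M := ℕ) role
  have hdiag : ∑ x, shapeDist (role x) (role x) =
      ∑ c, Fintype.card {x // role x = c} • shapeDist c c := hfib fun p => shapeDist p p
  have hall : ∑ x, ∑ y, shapeDist (role x) (role y) =
      ∑ c, Fintype.card {x // role x = c} •
        ∑ c', Fintype.card {x // role x = c'} • shapeDist c c' := by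
    rw [← hfib]
    exact Finset.sum_congr rfl fun x _ => hfib (shapeDist (role x))
  have hsum := hG.sum_sum_dist_add_sum_shapeDist
  rw [hdiag, hall] at hsum
  simp only [Fintype.sum_prod_type, Fintype.sum_bool, hG.card_hub, hk, hl, shapeDist] at hsum
  simp only [Bool.toNat_true, Bool.toNat_false, bne_self_eq_false, Bool.bne_true,
    Bool.bne_false, Bool.not_false, smul_eq_mul] at hsum
  have htwice : ∑ x, ∑ y, G.dist x y = 2 * (k ^ 2 + l ^ 2 + 3 * k * l + 2 * k + 2 * l + 1) := by
    linarith
  rw [wienerIndex, htwice, Nat.mul_div_cancel_left _ two_pos]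

theorem card_eq [Fintype V] (hG : IsDoubleStar G role) :
    Fintype.card V = Fintype.card {x // role x = (false, true)} +
      Fintype.card {x // role x = (true, true)} + 2 := by
  have := Fintype.sum_comp_eq_sum_card_fiber_smul role fun _ => 1
  simp only [Finset.sum_const, Finset.card_univ, smul_eq_mul, mul_one, Fintype.sum_prod_type,
    Fintype.sum_bool, hG.card_hub] at this
  omega

theorem card_leaf_pos [Fintype V] [DecidableRel G.Adj] (hG : IsDoubleStar G role) {s : Bool}
    (hdeg : G.degree (hG.hub s) ≠ 1) : 0 < Fintype.card {x // role x = (s, true)} := by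
  have hpos : 0 < G.degree (hG.hub s) :=
    (G.degree_pos_iff_exists_adj _).mpr ⟨_, hG.adj_hub_hub (Bool.not_ne_self s).symm⟩
  obtain ⟨y, hy, hne⟩ := Finset.exists_mem_ne (s := G.neighborFinset (hG.hub s))
    (by rw [card_neighborFinset_eq_degree]; omega) (hG.hub (!s))
  rw [mem_neighborFinset, hG.adj_iff, hG.role_hub] at hy
  have hy' : role y ≠ (!s, false) := fun h => hne (hG.eq_hub_iff.mpr h)
  have hshape : ∀ (s : Bool) (q : Bool × Bool),
      doubleStarShape.Adj (s, false) q → q ≠ (!s, false) → q = (s, true) := by decide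
  exact Fintype.card_pos_iff.mpr ⟨⟨y, hshape s _ hy hy'⟩⟩

theorem card_swap_leaf [Fintype V] (s : Bool) :
    Fintype.card {x // (Prod.map (!·) id ∘ role) x = (s, true)} =
      Fintype.card {x // role x = (!s, true)} :=
  Fintype.card_congr <| Equiv.subtypeEquivRight fun x => by
    simp [Prod.ext_iff, Bool.not_eq_eq_eq_not]

end IsDoubleStar

theorem exists_isDoubleStar_of_adj {V : Type*} {G : SimpleGraph V} {a b : V} (hab : G.Adj a b)
    (hleaf : ∀ x, x ≠ a → x ≠ b → G.neighborSet x = {a} ∨ G.neighborSet x = {b}) :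
    ∃ role, IsDoubleStar G role ∧ role a = (false, false) ∧ role b = (true, false) := by
  classical
  let hub (s : Bool) : V := bif s then b else a
  let role (x : V) : Bool × Bool :=
    if x = a then (false, false) else if x = b then (true, false) else (decide (G.Adj x b), true)
  have hrole_hub (x : V) (s : Bool) : role x = (s, false) ↔ x = hub s := by
    have := G.ne_of_adj hab
    by_cases hxa : x = a <;> by_cases hxb : x = b <;> cases s <;> simp_all [role, hub]
  have hnbr (x : V) (hxa : x ≠ a) (hxb : x ≠ b) : G.neighborSet x = {hub (role x).1} := by
    rcases hleaf x hxa hxb with h | h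
    · have : ¬ G.Adj x b := by
        rw [← mem_neighborSet, h, Set.mem_singleton_iff]
        exact (G.ne_of_adj hab).symm
      simp [role, hub, hxa, hxb, this, h]
    · have : G.Adj x b := by rw [← mem_neighborSet, h]; rfl
      simp [role, hub, hxa, hxb, this, h]
  have hleaf_adj (x y : V) (hxa : x ≠ a) (hxb : x ≠ b) :
      G.Adj x y ↔ doubleStarShape.Adj (role x) (role y) := by
    rw [← mem_neighborSet, hnbr x hxa hxb, Set.mem_singleton_iff, ← hrole_hub]
    have : (role x).2 = true := by simp [role, hxa, hxb]
    generalize role x = p at this ⊢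
    generalize role y = q
    revert p q
    decide
  refine ⟨role, ⟨?_, fun s => ⟨hub s, (hrole_hub _ s).mpr rfl, (hrole_hub · s |>.mp)⟩⟩,
    (hrole_hub a false).mpr rfl, (hrole_hub b true).mpr rfl⟩
  ext x y
  rw [comap_adj]
  by_cases hx : x = a ∨ x = b
  · by_cases hy : y = a ∨ y = b
    · rcases hx with rfl | rfl <;> rcases hy with rfl | rfl <;>
        simp [role, hab, hab.symm, (G.ne_of_adj hab).symm] <;> decide
    · obtain ⟨hya, hyb⟩ := not_or.mp hy
      rw [G.adj_comm, hleaf_adj y x hya hyb, doubleStarShape.adj_comm]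
  · obtain ⟨hxa, hxb⟩ := not_or.mp hx
    exact hleaf_adj x y hxa hxb

theorem exists_isDoubleStar_of_card_pendant {V : Type*} [Fintype V] {G : SimpleGraph V}
    [DecidableRel G.Adj] (hG : G.Connected) (hV : 3 ≤ Fintype.card V)
    (hpend : #{v | G.degree v = 1} = Fintype.card V - 2) :
    ∃ role, IsDoubleStar G role ∧ ∀ s, 0 < Fintype.card {x // role x = (s, true)} := by
  classical
  obtain ⟨a, b, hab, hcore⟩ :
      ∃ a b, a ≠ b ∧ ({v | ¬ G.degree v = 1} : Finset V) = {a, b} := by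
    refine Finset.card_eq_two.mp ?_
    have := Finset.card_filter_add_card_filter_not (s := univ) fun v => G.degree v = 1
    rw [card_univ] at this
    omega
  have hcore_iff (x : V) : ¬ G.degree x = 1 ↔ x = a ∨ x = b := by
    simpa using congrArg (x ∈ ·) hcore
  have hdeg_one (x : V) (hxa : x ≠ a) (hxb : x ≠ b) : G.degree x = 1 := by
    by_contra h
    exact ((hcore_iff x).mp h).elim hxa hxb
  obtain ⟨role, hD, hra, hrb⟩ := exists_isDoubleStar_of_adj
    (hG.adj_of_forall_degree_eq_one hV hdeg_one hab)
    fun x => hG.neighborSet_eq_singleton_of_forall_degree_eq_one hV hdeg_one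
  refine ⟨role, hD, fun s => hD.card_leaf_pos ?_⟩
  cases s
  · rw [← hD.eq_hub_iff.mpr hra]
    exact (hcore_iff a).mpr (Or.inl rfl)
  · rw [← hD.eq_hub_iff.mpr hrb]
    exact (hcore_iff b).mpr (Or.inr rfl)

def doubleBroomRole (k l : ℕ) (i : Fin (k + l + 2)) : Bool × Bool :=
  (decide (i.val = 1 ∨ k + 2 ≤ i.val), decide (2 ≤ i.val))

theorem isDoubleStar_doubleBroom (k l : ℕ) :
    IsDoubleStar (doubleBroom k l 2) (doubleBroomRole k l) where
  eq_comap := by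
    ext i j
    simp only [doubleBroom, fromRel_adj, comap_adj, doubleStarShape, doubleBroomRole, ne_eq,
      Fin.ext_iff, decide_eq_decide, decide_eq_false_iff_not]
    omega
  existsUnique_hub s := by
    refine ⟨⟨s.toNat, by cases s <;> simp⟩, ?_, fun i hi => Fin.ext ?_⟩
    · cases s <;> simp [doubleBroomRole]
    · cases s <;>
        simp only [doubleBroomRole, Prod.mk.injEq, decide_eq_true_eq, decide_eq_false_iff_not,
          Bool.toNat_false, Bool.toNat_true] at hi ⊢ <;> omega

theorem card_doubleBroomRole_false_true (k l : ℕ) :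
    Fintype.card {i // doubleBroomRole k l i = (false, true)} = k := by
  refine (Fintype.card_congr (Equiv.subtypeEquivRight fun i => ?_)).trans
    ((Fin.card_subtype_le_and_lt (a := 2) (b := k + 2) (by omega)).trans (by simp))
  simp [doubleBroomRole]
  omega

theorem card_doubleBroomRole_true_true (k l : ℕ) :
    Fintype.card {i // doubleBroomRole k l i = (true, true)} = l := by
  refine (Fintype.card_congr (Equiv.subtypeEquivRight fun i => ?_)).trans
    ((Fin.card_subtype_le_and_lt (a := k + 2) le_rfl).trans (by simp))
  simp [doubleBroomRole]
  omega

theorem IsDoubleStar.nonempty_iso_doubleBroom {V : Type*} [Fintype V] {G : SimpleGraph V}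
    {role : V → Bool × Bool} (hG : IsDoubleStar G role) {k l : ℕ}
    (hk : Fintype.card {x // role x = (false, true)} = k)
    (hl : Fintype.card {x // role x = (true, true)} = l) :
    Nonempty (G ≃g doubleBroom k l 2) :=
  hG.nonempty_iso (isDoubleStar_doubleBroom k l) fun s => by
    cases s
    · rw [hk, card_doubleBroomRole_false_true]
    · rw [hl, card_doubleBroomRole_true_true]

theorem stmt19_general {V : Type*} [Fintype V] (n : ℕ) (hn : 3 ≤ n)
    (G : SimpleGraph V) [DecidableRel G.Adj] (hcard : Fintype.card V = n)
    (hG : G.Connected)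
    (hpend : (Finset.univ.filter fun v => G.degree v = 1).card = n - 2) :
    (∃ k l : ℕ, 1 ≤ k ∧ 1 ≤ l ∧ k + l = n - 2 ∧ Nonempty (G ≃g doubleBroom k l 2)) ∧
    wienerIndex (doubleBroom 1 (n - 3) 2) ≤ wienerIndex G ∧
    (wienerIndex G = wienerIndex (doubleBroom 1 (n - 3) 2) ↔
      Nonempty (G ≃g doubleBroom 1 (n - 3) 2)) ∧
    wienerIndex (doubleBroom 1 (n - 3) 2) = n ^ 2 - n - 2 := by
  obtain ⟨role, hD, hleaf⟩ :=
    exists_isDoubleStar_of_card_pendant hG (hcard ▸ hn) (by rw [hpend, hcard])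
  obtain ⟨k, hk⟩ := Nat.exists_eq_add_one_of_ne_zero (hleaf false).ne'
  obtain ⟨l, hl⟩ := Nat.exists_eq_add_one_of_ne_zero (hleaf true).ne'
  have hn3 : n - 3 = k + l + 1 := by have := hD.card_eq; omega
  have hWT := (isDoubleStar_doubleBroom 1 (n - 3)).wienerIndex_eq
    (card_doubleBroomRole_false_true 1 (n - 3)) (card_doubleBroomRole_true_true 1 (n - 3))
  have hgap : wienerIndex G = wienerIndex (doubleBroom 1 (n - 3) 2) + k * l := by
    rw [hD.wienerIndex_eq hk hl, hWT, hn3]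
    ring
  refine ⟨⟨k + 1, l + 1, by omega, by omega, by omega, hD.nonempty_iso_doubleBroom hk hl⟩,
    hgap ▸ Nat.le_add_right _ _, ⟨fun h => ?_, fun ⟨e⟩ => wienerIndex_congr e⟩, ?_⟩
  · rcases Nat.mul_eq_zero.mp (by omega : k * l = 0) with hk0 | hl0
    · rw [show n - 3 = l + 1 by omega]
      exact hD.nonempty_iso_doubleBroom (by rw [hk, hk0]) hl
    · rw [show n - 3 = k + 1 by omega]
      exact hD.swap.nonempty_iso_doubleBroom
        ((IsDoubleStar.card_swap_leaf false).trans (by rw [Bool.not_false, hl, hl0]))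
        ((IsDoubleStar.card_swap_leaf true).trans hk)
  · obtain ⟨m, rfl⟩ : ∃ m, n = m + 3 := ⟨n - 3, by omega⟩
    rw [hWT, Nat.add_sub_cancel]
    have : (m + 3) ^ 2 = m ^ 2 + 6 * m + 9 := by ring
    omega

/-- Every connected graph on n ≥ 3 vertices with exactly n-2 pendant vertices is a double
star T(k,l,2) with k,l ≥ 1, k+l = n-2; its Wiener index is minimized uniquely by
T(1,n-3,2), whose Wiener index is n² - n - 2. -/
theorem stmt19 {V : Type*} [Fintype V] [DecidableEq V] (n : ℕ) (hn : 3 ≤ n)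
    (G : SimpleGraph V) [DecidableRel G.Adj] (hcard : Fintype.card V = n)
    (hG : G.Connected)
    (hpend : (Finset.univ.filter fun v => G.degree v = 1).card = n - 2) :
    (∃ k l : ℕ, 1 ≤ k ∧ 1 ≤ l ∧ k + l = n - 2 ∧ Nonempty (G ≃g doubleBroom k l 2)) ∧
    wienerIndex (doubleBroom 1 (n - 3) 2) ≤ wienerIndex G ∧
    (wienerIndex G = wienerIndex (doubleBroom 1 (n - 3) 2) ↔
      Nonempty (G ≃g doubleBroom 1 (n - 3) 2)) ∧
    wienerIndex (doubleBroom 1 (n - 3) 2) = n ^ 2 - n - 2 :=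
  stmt19_general n hn G hcard hG hpend
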